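/- Let p, q ≥ 1, and for each n ≥ 1 let F_n be a list of r_n ≥ 1 functions ℂ^p → ℂ and G_n a list of s_n ≥ 1 functions ℂ^q → ℂ. Let H_n be the list of the r_n s_n external products (x, y) ↦ f(x) g(y) on ℂ^p × ℂ^q, for f in F_n and g in G_n. Let τ₁ ⊆ ℂ^p and τ₂ ⊆ ℂ^q, and let e^F_n, e^G_n, e^H_n be positive integers with e^H_n / (r_n s_n · log(r_n s_n)) → ∞, e^F_n s_n / e^H_n → α₁, and e^G_n r_n / e^H_n → α₂, where α₁, α₂ ≥ 0. Assume t_{F_n}(τ₁) and t_{G_n}(τ₂) are finite for each n, and that the sequences t_{F_n}(τ₁)^{1/e^F_n} and t_{G_n}(τ₂)^{1/e^G_n} converge to finite strictly positive limits A and B respectively. Then the sequence t_{H_n}(τ₁ × τ₂)^{1/e^H_n} converges, and its limit equals A^{α₁} · B^{α₂}. -/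

import Mathlib

open Filter
open scoped ENNReal

/-- The Vandermonde supremum `t_{(m_1,…,m_N)}(τ)`: the supremum over all tuples
`z : ι → S` of points of `τ` of the absolute value of the generalized Vandermonde
determinant `det (m j (z i))`, valued in `[0, ∞]`. -/
noncomputable def vandSup {S ι : Type*} [Fintype ι] [DecidableEq ι]
    (τ : Set S) (m : ι → S → ℂ) : ℝ≥0∞ :=
  ⨆ (z : ι → S) (_ : ∀ i, z i ∈ τ),
    (‖(Matrix.of fun i j : ι => m j (z i)).det‖₊ : ℝ≥0∞)

/-! Evaluating the external products at a grid `w × v` gives the Kronecker product of the two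
Vandermonde matrices, whose determinant is `det V ^ s * det W ^ r`; hence
`t_F ^ s * t_G ^ r ≤ t_H`. Conversely, fix nonsingular configurations `w`, `v`. By Cramer's rule
every evaluation vector of `F` at a point of `τ₁` has coordinates of size at most
`t_F / |det V|` in the basis of evaluations at `w`, and likewise for `G`. So the matrix of `H` at
any configuration in `τ₁ × τ₂` is a coordinate matrix times `V ⊗ W`, and bounding the
coordinate determinant by the permutation expansion gives, after letting `|det V| → t_F` and
`|det W| → t_G`, the bound `t_H ≤ (rs)! * t_F ^ s * t_G ^ r`. Taking `e^H`-th roots, the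
factorial disappears in the limit because `log (rs)! ≤ rs log (rs) = o(e^H)`. -/

open Matrix Topology
open scoped Nat Kronecker

variable {X Y ι κ : Type*}

def vandMatrix (m : ι → X → ℂ) (z : ι → X) : Matrix ι ι ℂ :=
  Matrix.of fun i j => m j (z i)

def externalProduct (F : ι → X → ℂ) (G : κ → Y → ℂ) : ι × κ → X × Y → ℂ :=
  fun ij z => F ij.1 z.1 * G ij.2 z.2

section vandSup

variable [Fintype ι] [DecidableEq ι] {τ : Set X} (m : ι → X → ℂ)

lemma nnnorm_det_le_vandSup {z : ι → X} (hz : ∀ i, z i ∈ τ) :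
    (‖(vandMatrix m z).det‖₊ : ℝ≥0∞) ≤ vandSup τ m :=
  le_iSup₂ (f := fun z (_ : ∀ i, z i ∈ τ) => (‖(vandMatrix m z).det‖₊ : ℝ≥0∞)) z hz

lemma norm_det_le_toReal_vandSup (h : vandSup τ m ≠ ⊤) {z : ι → X} (hz : ∀ i, z i ∈ τ) :
    ‖(vandMatrix m z).det‖ ≤ (vandSup τ m).toReal := by
  rw [← coe_nnnorm, ← ENNReal.coe_toReal]
  exact ENNReal.toReal_mono h (nnnorm_det_le_vandSup m hz)

lemma vandSup_le {C : ℝ≥0∞} (h : ∀ z : ι → X, (∀ i, z i ∈ τ) →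
    (‖(vandMatrix m z).det‖₊ : ℝ≥0∞) ≤ C) : vandSup τ m ≤ C :=
  iSup₂_le h

/-- Singular configurations contribute `0` to the supremum, so only nonsingular ones need to be
tested. -/
lemma mul_vandSup_pow_le (h0 : vandSup τ m ≠ 0) {x C : ℝ≥0∞} {k : ℕ}
    (h : ∀ z : ι → X, (∀ i, z i ∈ τ) → (vandMatrix m z).det ≠ 0 →
      x * (‖(vandMatrix m z).det‖₊ : ℝ≥0∞) ^ k ≤ C) :
    x * vandSup τ m ^ k ≤ C := by
  set f : {z : ι → X // ∀ i, z i ∈ τ} → ℝ≥0∞ := fun z => ‖(vandMatrix m z.1).det‖₊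
  have hsup : vandSup τ m = ⨆ z : {z // f z ≠ ⊥}, f z := by
    rw [iSup_ne_bot_subtype, vandSup, iSup_subtype']
    rfl
  rw [hsup] at h0 ⊢
  have : Nonempty {z // f z ≠ ⊥} := by
    by_contra hne
    exact h0 (by rw [not_nonempty_iff] at hne; exact iSup_of_empty _)
  rw [ENNReal.iSup_pow, ENNReal.mul_iSup]
  exact iSup_le fun z => h _ z.1.2 (by simpa [f] using z.2)

end vandSup

section coordinates

variable [Fintype ι] [DecidableEq ι] (F : ι → X → ℂ) (w : ι → X)

noncomputable def vandCoord (x : X) : ι → ℂ :=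
  (vandMatrix F w)ᵀ⁻¹ *ᵥ fun j => F j x

variable {F w}

lemma sum_vandMatrix_mul_vandCoord (hw : (vandMatrix F w).det ≠ 0) (x : X) (j : ι) :
    ∑ a, vandMatrix F w a j * vandCoord F w x a = F j x := by
  have hu : IsUnit (vandMatrix F w)ᵀ.det := by
    rw [det_transpose]; exact isUnit_iff_ne_zero.2 hw
  have := congrFun (mulVec_mulVec (M := (vandMatrix F w)ᵀ) (N := (vandMatrix F w)ᵀ⁻¹)
    fun j => F j x) j
  rw [mul_nonsing_inv _ hu, one_mulVec] at this
  rw [← this]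
  simp [vandCoord, mulVec, dotProduct]

lemma det_mul_vandCoord (hw : (vandMatrix F w).det ≠ 0) (x : X) (a : ι) :
    (vandMatrix F w).det * vandCoord F w x a = (vandMatrix F (Function.update w a x)).det := by
  have hu : IsUnit (vandMatrix F w)ᵀ.det := by
    rw [det_transpose]; exact isUnit_iff_ne_zero.2 hw
  have := congrFun (det_smul_inv_mulVec_eq_cramer _ (fun j => F j x) hu) a
  rw [det_transpose, Pi.smul_apply, smul_eq_mul, cramer_transpose_apply] at this
  rw [vandCoord, this]
  congr 1
  ext i j
  rcases eq_or_ne i a with rfl | h <;> simp [vandMatrix, updateRow_apply, *]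

lemma norm_det_mul_norm_vandCoord_le {τ : Set X} {T : ℝ}
    (hT : ∀ z : ι → X, (∀ i, z i ∈ τ) → ‖(vandMatrix F z).det‖ ≤ T)
    (hwτ : ∀ i, w i ∈ τ) (hw : (vandMatrix F w).det ≠ 0) {x : X} (hx : x ∈ τ) (a : ι) :
    ‖(vandMatrix F w).det‖ * ‖vandCoord F w x a‖ ≤ T := by
  rw [← norm_mul, det_mul_vandCoord hw]
  refine hT _ fun i => ?_
  rcases eq_or_ne i a with rfl | h <;> simp [*]

end coordinates

section externalProduct

lemma vandMatrix_externalProduct_prodMap {F : ι → X → ℂ} {G : κ → Y → ℂ} (w : ι → X)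
    (v : κ → Y) :
    vandMatrix (externalProduct F G) (fun ik => (w ik.1, v ik.2)) =
      vandMatrix F w ⊗ₖ vandMatrix G v := by
  ext ⟨i, k⟩ ⟨j, l⟩
  simp [vandMatrix, externalProduct]

variable [Fintype ι] [DecidableEq ι] [Fintype κ] [DecidableEq κ]

noncomputable def externalCoordMatrix (F : ι → X → ℂ) (G : κ → Y → ℂ) (w : ι → X) (v : κ → Y)
    (z : ι × κ → X × Y) : Matrix (ι × κ) (ι × κ) ℂ :=
  Matrix.of fun i ab => vandCoord F w (z i).1 ab.1 * vandCoord G v (z i).2 ab.2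

variable {F : ι → X → ℂ} {G : κ → Y → ℂ}

lemma vandMatrix_externalProduct_eq_mul_kronecker {w : ι → X} {v : κ → Y}
    (hw : (vandMatrix F w).det ≠ 0) (hv : (vandMatrix G v).det ≠ 0) (z : ι × κ → X × Y) :
    vandMatrix (externalProduct F G) z =
      externalCoordMatrix F G w v z * (vandMatrix F w ⊗ₖ vandMatrix G v) := by
  ext i ⟨j, l⟩
  rw [mul_apply, Fintype.sum_prod_type]
  simp only [vandMatrix, externalProduct, externalCoordMatrix, of_apply, kroneckerMap_apply]
  rw [← sum_vandMatrix_mul_vandCoord hw (z i).1 j, ← sum_vandMatrix_mul_vandCoord hv (z i).2 l,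
    Finset.sum_mul_sum]
  simp only [vandMatrix, of_apply]
  exact Finset.sum_congr rfl fun a _ => Finset.sum_congr rfl fun b _ => by ring

variable {τ₁ : Set X} {τ₂ : Set Y} {TF TG : ℝ}
  (hTF : ∀ w : ι → X, (∀ i, w i ∈ τ₁) → ‖(vandMatrix F w).det‖ ≤ TF)
  (hTG : ∀ v : κ → Y, (∀ i, v i ∈ τ₂) → ‖(vandMatrix G v).det‖ ≤ TG)
  {z : ι × κ → X × Y} (hz : ∀ i, z i ∈ τ₁ ×ˢ τ₂)
  {w : ι → X} (hwτ : ∀ i, w i ∈ τ₁) (hw : (vandMatrix F w).det ≠ 0)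
  {v : κ → Y} (hvτ : ∀ i, v i ∈ τ₂) (hv : (vandMatrix G v).det ≠ 0)
include hTF hTG hz hwτ hw hvτ hv

/-- The entries are bounded by Cramer's rule and the determinant by the permutation expansion;
this is where the factorial comes from. -/
lemma norm_det_externalCoordMatrix_mul_le :
    ‖(externalCoordMatrix F G w v z).det‖ *
        (‖(vandMatrix F w).det‖ * ‖(vandMatrix G v).det‖) ^ Fintype.card (ι × κ) ≤
      (Fintype.card (ι × κ))! * (TF * TG) ^ Fintype.card (ι × κ) := by
  set dF := ‖(vandMatrix F w).det‖
  set dG := ‖(vandMatrix G v).det‖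
  have hdF : |dF| = dF := abs_norm _
  have hdG : |dG| = dG := abs_norm _
  have hentry : ∀ i ab,
      ‖(((dF * dG : ℝ) : ℂ) • externalCoordMatrix F G w v z) i ab‖ ≤ TF * TG := fun i ab => by
    have h1 := norm_det_mul_norm_vandCoord_le hTF hwτ hw (hz i).1 ab.1
    have h2 := norm_det_mul_norm_vandCoord_le hTG hvτ hv (hz i).2 ab.2
    calc ‖(((dF * dG : ℝ) : ℂ) • externalCoordMatrix F G w v z) i ab‖
        = (dF * ‖vandCoord F w (z i).1 ab.1‖) * (dG * ‖vandCoord G v (z i).2 ab.2‖) := by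
          simp only [Matrix.smul_apply, externalCoordMatrix, of_apply, smul_eq_mul, norm_mul,
            Complex.norm_real, Real.norm_eq_abs, hdF, hdG]
          ring
      _ ≤ TF * TG :=
          mul_le_mul h1 h2 (by positivity) ((mul_nonneg (norm_nonneg _) (norm_nonneg _)).trans h1)
  have := det_le (abv := NormedField.toAbsoluteValue ℂ) hentry
  rw [show ⇑(NormedField.toAbsoluteValue ℂ) = norm from rfl] at this
  simpa only [det_smul, norm_mul, norm_pow, Complex.norm_real, Real.norm_eq_abs, abs_mul, hdF,
    hdG, nsmul_eq_mul, mul_comm] using this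

lemma norm_det_vandMatrix_externalProduct_mul_le [Nonempty ι] [Nonempty κ] :
    ‖(vandMatrix (externalProduct F G) z).det‖ *
        ‖(vandMatrix F w).det‖ ^ (Fintype.card ι * Fintype.card κ - Fintype.card κ) *
        ‖(vandMatrix G v).det‖ ^ (Fintype.card ι * Fintype.card κ - Fintype.card ι) ≤
      (Fintype.card ι * Fintype.card κ)! * TF ^ (Fintype.card ι * Fintype.card κ) *
        TG ^ (Fintype.card ι * Fintype.card κ) := by
  set N := Fintype.card ι * Fintype.card κ
  set dF := ‖(vandMatrix F w).det‖
  set dG := ‖(vandMatrix G v).det‖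
  have hsN : Fintype.card κ ≤ N := Nat.le_mul_of_pos_left _ Fintype.card_pos
  have hrN : Fintype.card ι ≤ N := Nat.le_mul_of_pos_right _ Fintype.card_pos
  have hC := norm_det_externalCoordMatrix_mul_le hTF hTG hz hwτ hw hvτ hv
  rw [Fintype.card_prod] at hC
  calc ‖(vandMatrix (externalProduct F G) z).det‖ * dF ^ (N - Fintype.card κ) *
        dG ^ (N - Fintype.card ι)
      = ‖(externalCoordMatrix F G w v z).det‖ *
          (dF ^ Fintype.card κ * dF ^ (N - Fintype.card κ)) *
          (dG ^ Fintype.card ι * dG ^ (N - Fintype.card ι)) := by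
        rw [vandMatrix_externalProduct_eq_mul_kronecker hw hv, det_mul, det_kronecker]
        simp only [norm_mul, norm_pow, dF, dG]
        ring
    _ = ‖(externalCoordMatrix F G w v z).det‖ * (dF * dG) ^ N := by
        rw [pow_mul_pow_sub _ hsN, pow_mul_pow_sub _ hrN, mul_pow]
        ring
    _ ≤ N ! * (TF * TG) ^ N := hC
    _ = N ! * TF ^ N * TG ^ N := by ring

end externalProduct

section bounds

variable [Fintype ι] [DecidableEq ι] [Fintype κ] [DecidableEq κ] [Nonempty ι] [Nonempty κ]
  {F : ι → X → ℂ} {G : κ → Y → ℂ} {τ₁ : Set X} {τ₂ : Set Y}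

lemma vandSup_pow_mul_vandSup_pow_le :
    vandSup τ₁ F ^ Fintype.card κ * vandSup τ₂ G ^ Fintype.card ι ≤
      vandSup (τ₁ ×ˢ τ₂) (externalProduct F G) := by
  rcases eq_or_ne (vandSup τ₁ F) 0 with hF0 | hF0
  · simp [hF0]
  rcases eq_or_ne (vandSup τ₂ G) 0 with hG0 | hG0
  · simp [hG0]
  refine mul_vandSup_pow_le G hG0 fun v hv _ => ?_
  rw [mul_comm]
  refine mul_vandSup_pow_le F hF0 fun w hw _ => ?_
  calc (‖(vandMatrix G v).det‖₊ : ℝ≥0∞) ^ Fintype.card ι *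
        ‖(vandMatrix F w).det‖₊ ^ Fintype.card κ
      = ‖(vandMatrix (externalProduct F G) (fun ik => (w ik.1, v ik.2))).det‖₊ := by
        rw [vandMatrix_externalProduct_prodMap, det_kronecker, nnnorm_mul, nnnorm_pow, nnnorm_pow]
        push_cast
        ring
    _ ≤ vandSup (τ₁ ×ˢ τ₂) (externalProduct F G) :=
        nnnorm_det_le_vandSup _ fun ik => ⟨hw ik.1, hv ik.2⟩

variable (hFt : vandSup τ₁ F ≠ ⊤) (hGt : vandSup τ₂ G ≠ ⊤)
  (hF0 : vandSup τ₁ F ≠ 0) (hG0 : vandSup τ₂ G ≠ 0)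
include hFt hGt hF0 hG0

lemma nnnorm_det_vandMatrix_externalProduct_mul_vandSup_le {z : ι × κ → X × Y}
    (hz : ∀ i, z i ∈ τ₁ ×ˢ τ₂) :
    (‖(vandMatrix (externalProduct F G) z).det‖₊ : ℝ≥0∞) *
        vandSup τ₁ F ^ (Fintype.card ι * Fintype.card κ - Fintype.card κ) *
        vandSup τ₂ G ^ (Fintype.card ι * Fintype.card κ - Fintype.card ι) ≤
      (Fintype.card ι * Fintype.card κ)! * vandSup τ₁ F ^ (Fintype.card ι * Fintype.card κ) *
        vandSup τ₂ G ^ (Fintype.card ι * Fintype.card κ) := by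
  refine mul_vandSup_pow_le G hG0 fun v hv hvdet => ?_
  rw [mul_right_comm]
  refine mul_vandSup_pow_le F hF0 fun w hw hwdet => ?_
  rw [mul_right_comm]
  have hreal := norm_det_vandMatrix_externalProduct_mul_le
    (fun w hw => norm_det_le_toReal_vandSup F hFt hw)
    (fun v hv => norm_det_le_toReal_vandSup G hGt hv) hz hw hwdet hv hvdet
  rw [← ENNReal.coe_toNNReal hFt, ← ENNReal.coe_toNNReal hGt]
  exact_mod_cast (show _ ≤ _ from by rw [← NNReal.coe_le_coe]; push_cast; exact hreal)

lemma vandSup_externalProduct_le :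
    vandSup (τ₁ ×ˢ τ₂) (externalProduct F G) ≤
      (Fintype.card ι * Fintype.card κ)! * vandSup τ₁ F ^ Fintype.card κ *
        vandSup τ₂ G ^ Fintype.card ι := by
  set N := Fintype.card ι * Fintype.card κ
  set tF := vandSup τ₁ F
  set tG := vandSup τ₂ G
  have hsN : Fintype.card κ ≤ N := Nat.le_mul_of_pos_left _ Fintype.card_pos
  have hrN : Fintype.card ι ≤ N := Nat.le_mul_of_pos_right _ Fintype.card_pos
  have hc0 : tF ^ (N - Fintype.card κ) * tG ^ (N - Fintype.card ι) ≠ 0 :=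
    mul_ne_zero (pow_ne_zero _ hF0) (pow_ne_zero _ hG0)
  have hct : tF ^ (N - Fintype.card κ) * tG ^ (N - Fintype.card ι) ≠ ⊤ :=
    ENNReal.mul_ne_top (ENNReal.pow_ne_top hFt) (ENNReal.pow_ne_top hGt)
  refine vandSup_le _ fun z hz => ?_
  rw [← ENNReal.mul_le_mul_iff_left hc0 hct, ← mul_assoc]
  calc _ ≤ N ! * tF ^ N * tG ^ N :=
        nnnorm_det_vandMatrix_externalProduct_mul_vandSup_le hFt hGt hF0 hG0 hz
    _ = N ! * tF ^ Fintype.card κ * tG ^ Fintype.card ι *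
          (tF ^ (N - Fintype.card κ) * tG ^ (N - Fintype.card ι)) := by
        rw [← pow_mul_pow_sub tF hsN, ← pow_mul_pow_sub tG hrN]
        ring

end bounds

section limits

variable {α : Type*} {l : Filter α}

lemma Filter.Tendsto.ennrpow {u : α → ℝ≥0∞} {a : α → ℝ} {x : ℝ≥0∞} {y : ℝ}
    (hu : Tendsto u l (𝓝 x)) (ha : Tendsto a l (𝓝 y)) (hx0 : x ≠ 0) (hxt : x ≠ ⊤) :
    Tendsto (fun n => u n ^ a n) l (𝓝 (x ^ y)) := by
  have hx : x.toNNReal ≠ 0 := ENNReal.toNNReal_ne_zero.2 ⟨hx0, hxt⟩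
  have h := (ENNReal.continuous_coe.tendsto _).comp
    (((ENNReal.tendsto_toNNReal hxt).comp hu).nnrpow ha (Or.inl hx))
  rw [ENNReal.coe_rpow_of_ne_zero hx, ENNReal.coe_toNNReal hxt] at h
  refine h.congr' ?_
  filter_upwards [hu.eventually_ne hx0, hu.eventually_ne hxt] with n h0 ht
  simp only [Function.comp_apply]
  rw [ENNReal.coe_rpow_of_ne_zero (ENNReal.toNNReal_ne_zero.2 ⟨h0, ht⟩),
    ENNReal.coe_toNNReal ht]

lemma eventually_ne_zero_of_tendsto_rpow_one_div {x : α → ℝ≥0∞} {e : α → ℕ}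
    (he : ∀ n, 0 < e n) {A : ℝ≥0∞} (hA : A ≠ 0)
    (h : Tendsto (fun n => x n ^ (1 / (e n : ℝ))) l (𝓝 A)) : ∀ᶠ n in l, x n ≠ 0 := by
  filter_upwards [h.eventually_ne hA] with n hn h0
  rw [h0, ENNReal.zero_rpow_of_pos (by have := he n; positivity)] at hn
  exact hn rfl

lemma ENNReal.pow_rpow_one_div_eq (x : ℝ≥0∞) (k : ℕ) {e : ℝ} (he : e ≠ 0) (m : ℝ) :
    (x ^ k) ^ (1 / m) = (x ^ (1 / e)) ^ (e * k / m) := by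
  rw [← ENNReal.rpow_natCast, ← ENNReal.rpow_mul, ← ENNReal.rpow_mul]
  congr 1
  field_simp

lemma tendsto_pow_mul_pow_rpow_one_div {x y : α → ℝ≥0∞} {k m e ex ey : α → ℕ}
    (hex : ∀ n, 0 < ex n) (hey : ∀ n, 0 < ey n) {A B : ℝ≥0∞} {β γ : ℝ}
    (hx : Tendsto (fun n => x n ^ (1 / (ex n : ℝ))) l (𝓝 A))
    (hy : Tendsto (fun n => y n ^ (1 / (ey n : ℝ))) l (𝓝 B))
    (hk : Tendsto (fun n => (ex n : ℝ) * k n / e n) l (𝓝 β))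
    (hm : Tendsto (fun n => (ey n : ℝ) * m n / e n) l (𝓝 γ))
    (hA0 : A ≠ 0) (hAt : A ≠ ⊤) (hB0 : B ≠ 0) (hBt : B ≠ ⊤) :
    Tendsto (fun n => (x n ^ k n * y n ^ m n) ^ (1 / (e n : ℝ))) l (𝓝 (A ^ β * B ^ γ)) := by
  refine (ENNReal.Tendsto.mul (hx.ennrpow hk hA0 hAt)
    (Or.inl (ENNReal.rpow_pos (pos_iff_ne_zero.2 hA0) hAt).ne') (hy.ennrpow hm hB0 hBt)
    (Or.inl (ENNReal.rpow_pos (pos_iff_ne_zero.2 hB0) hBt).ne')).congr fun n => ?_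
  rw [ENNReal.mul_rpow_of_nonneg _ _ (by positivity),
    ENNReal.pow_rpow_one_div_eq _ _ (Nat.cast_ne_zero.2 (hex n).ne'),
    ENNReal.pow_rpow_one_div_eq _ _ (Nat.cast_ne_zero.2 (hey n).ne')]

lemma tendsto_factorial_rpow_one_div {N e : α → ℕ}
    (h : Tendsto (fun n => (e n : ℝ) / (N n * Real.log (N n))) l atTop) :
    Tendsto (fun n => ((N n)! : ℝ≥0∞) ^ (1 / (e n : ℝ))) l (𝓝 1) := by
  have hlog : Tendsto (fun n => Real.log (N n)! / e n) l (𝓝 0) := by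
    refine tendsto_of_tendsto_of_tendsto_of_le_of_le tendsto_const_nhds
      (h.inv_tendsto_atTop.congr fun n => inv_div _ _) (fun n => by positivity) fun n => ?_
    gcongr
    calc Real.log (N n)! ≤ Real.log ((N n ^ N n : ℕ) : ℝ) :=
          Real.log_le_log (by positivity) (by exact_mod_cast Nat.factorial_le_pow _)
      _ = N n * Real.log (N n) := by push_cast; rw [Real.log_pow]
  have := ENNReal.tendsto_ofReal ((Real.continuous_exp.tendsto 0).comp hlog)
  rw [Real.exp_zero, ENNReal.ofReal_one] at this
  refine this.congr fun n => ?_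
  have hpos : (0 : ℝ) < (N n)! := by positivity
  rw [Function.comp_apply, ← ENNReal.ofReal_natCast, ENNReal.ofReal_rpow_of_pos hpos,
    Real.rpow_def_of_pos hpos, mul_one_div]

end limits

theorem tendsto_vandSup_external_product_general
    (p q : ℕ)
    (r s : ℕ → ℕ) (hr : ∀ n, 1 ≤ r n) (hs : ∀ n, 1 ≤ s n)
    (F : ∀ n, Fin (r n) → (Fin p → ℂ) → ℂ) (G : ∀ n, Fin (s n) → (Fin q → ℂ) → ℂ)
    (τ₁ : Set (Fin p → ℂ)) (τ₂ : Set (Fin q → ℂ))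
    (eF eG eH : ℕ → ℕ)
    (heF : ∀ n, 0 < eF n) (heG : ∀ n, 0 < eG n)
    (hgrow : Tendsto
      (fun n => (eH n : ℝ) / (((r n : ℝ) * (s n : ℝ)) * Real.log ((r n : ℝ) * (s n : ℝ))))
      atTop atTop)
    (α₁ α₂ : ℝ)
    (hαlim : Tendsto (fun n => ((eF n : ℝ) * (s n : ℝ)) / (eH n : ℝ)) atTop (nhds α₁))
    (hβlim : Tendsto (fun n => ((eG n : ℝ) * (r n : ℝ)) / (eH n : ℝ)) atTop (nhds α₂))
    (hFfin : ∀ n, vandSup τ₁ (F n) ≠ ⊤) (hGfin : ∀ n, vandSup τ₂ (G n) ≠ ⊤)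
    (A B : ℝ≥0∞)
    (hA : Tendsto (fun n => vandSup τ₁ (F n) ^ (1 / (eF n : ℝ))) atTop (nhds A))
    (hB : Tendsto (fun n => vandSup τ₂ (G n) ^ (1 / (eG n : ℝ))) atTop (nhds B))
    (hA0 : 0 < A) (hAtop : A ≠ ⊤) (hB0 : 0 < B) (hBtop : B ≠ ⊤) :
    Tendsto (fun n =>
        vandSup (τ₁ ×ˢ τ₂)
            (fun pr : Fin (r n) × Fin (s n) =>
              fun z : (Fin p → ℂ) × (Fin q → ℂ) => F n pr.1 z.1 * G n pr.2 z.2)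
          ^ (1 / (eH n : ℝ))) atTop
      (nhds (A ^ α₁ * B ^ α₂)) := by
  have : ∀ n, NeZero (r n) := fun n => ⟨by have := hr n; omega⟩
  have : ∀ n, NeZero (s n) := fun n => ⟨by have := hs n; omega⟩
  have he : ∀ n, (0 : ℝ) ≤ 1 / (eH n : ℝ) := fun n => by positivity
  have hL := tendsto_pow_mul_pow_rpow_one_div (e := eH) heF heG hA hB hαlim hβlim
    hA0.ne' hAtop hB0.ne' hBtop
  have hψL := ENNReal.Tendsto.mul (tendsto_factorial_rpow_one_div (N := fun n => r n * s n)
    (by simpa only [Nat.cast_mul] using hgrow)) (Or.inl one_ne_zero) hL (Or.inr ENNReal.one_ne_top)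
  rw [one_mul] at hψL
  refine tendsto_of_tendsto_of_tendsto_of_le_of_le' hL hψL (Eventually.of_forall fun n => ?_) ?_
  · have := vandSup_pow_mul_vandSup_pow_le (F := F n) (G := G n) (τ₁ := τ₁) (τ₂ := τ₂)
    rw [Fintype.card_fin, Fintype.card_fin] at this
    exact ENNReal.rpow_le_rpow this (he n)
  · filter_upwards [eventually_ne_zero_of_tendsto_rpow_one_div heF hA0.ne' hA,
      eventually_ne_zero_of_tendsto_rpow_one_div heG hB0.ne' hB] with n hF0 hG0
    have := vandSup_externalProduct_le (hFfin n) (hGfin n) hF0 hG0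
    rw [Fintype.card_fin, Fintype.card_fin, mul_assoc] at this
    rw [← ENNReal.mul_rpow_of_nonneg _ _ (he n)]
    exact ENNReal.rpow_le_rpow this (he n)

/-- Multiplicativity of the supremal transfinite diameter for
external products: if `t_{F_n}(τ₁)^{1/e^F_n} → A` and `t_{G_n}(τ₂)^{1/e^G_n} → B`,
then `t_{H_n}(τ₁ × τ₂)^{1/e^H_n} → A^{α₁} · B^{α₂}` where `H_n` is the list of
external products `(x, y) ↦ f(x)g(y)`. -/
theorem tendsto_vandSup_external_product
    (p q : ℕ) (hp : 1 ≤ p) (hq : 1 ≤ q)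
    (r s : ℕ → ℕ) (hr : ∀ n, 1 ≤ r n) (hs : ∀ n, 1 ≤ s n)
    (F : ∀ n, Fin (r n) → (Fin p → ℂ) → ℂ) (G : ∀ n, Fin (s n) → (Fin q → ℂ) → ℂ)
    (τ₁ : Set (Fin p → ℂ)) (τ₂ : Set (Fin q → ℂ))
    (eF eG eH : ℕ → ℕ)
    (heF : ∀ n, 0 < eF n) (heG : ∀ n, 0 < eG n) (heH : ∀ n, 0 < eH n)
    (hgrow : Tendsto
      (fun n => (eH n : ℝ) / (((r n : ℝ) * (s n : ℝ)) * Real.log ((r n : ℝ) * (s n : ℝ))))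
      atTop atTop)
    (α₁ α₂ : ℝ) (hα₁ : 0 ≤ α₁) (hα₂ : 0 ≤ α₂)
    (hαlim : Tendsto (fun n => ((eF n : ℝ) * (s n : ℝ)) / (eH n : ℝ)) atTop (nhds α₁))
    (hβlim : Tendsto (fun n => ((eG n : ℝ) * (r n : ℝ)) / (eH n : ℝ)) atTop (nhds α₂))
    (hFfin : ∀ n, vandSup τ₁ (F n) ≠ ⊤) (hGfin : ∀ n, vandSup τ₂ (G n) ≠ ⊤)
    (A B : ℝ≥0∞)
    (hA : Tendsto (fun n => vandSup τ₁ (F n) ^ (1 / (eF n : ℝ))) atTop (nhds A))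
    (hB : Tendsto (fun n => vandSup τ₂ (G n) ^ (1 / (eG n : ℝ))) atTop (nhds B))
    (hA0 : 0 < A) (hAtop : A ≠ ⊤) (hB0 : 0 < B) (hBtop : B ≠ ⊤) :
    Tendsto (fun n =>
        vandSup (τ₁ ×ˢ τ₂)
            (fun pr : Fin (r n) × Fin (s n) =>
              fun z : (Fin p → ℂ) × (Fin q → ℂ) => F n pr.1 z.1 * G n pr.2 z.2)
          ^ (1 / (eH n : ℝ))) atTop
      (nhds (A ^ α₁ * B ^ α₂)) :=
  tendsto_vandSup_external_product_general p q r s hr hs F G τ₁ τ₂ eF eG eH heF heG hgrow α₁ α₂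
    hαlim hβlim hFfin hGfin A B hA hB hA0 hAtop hB0 hBtop
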